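/- Let u, v ∈ ℝ^d with ⟨v, u⟩ ≠ 0, let A be a symmetric positive definite real d×d matrix, and set G := u vᵀ (a rank-one matrix) and S := (trace(G) / ⟨v, A v⟩) · v vᵀ. Then S is symmetric and satisfies S G + Gᵀ S = 2 S A S and trace(A S) = trace(G). -/

import Mathlib

open Matrix

/-- For a rank-one matrix `G = u vᵀ` with `⟨v, u⟩ ≠ 0` and `A` symmetric positive definite,
the matrix `S = (trace G / ⟨v, A v⟩) · v vᵀ` is symmetric, solves the Riccati equation
`S G + Gᵀ * S = 2 S A S`, and satisfies `trace(A S) = trace(G)`. -/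
theorem riccati_rank_one {d : ℕ} (u v : Fin d → ℝ) (A : Matrix (Fin d) (Fin d) ℝ)
    (hv : v ⬝ᵥ u ≠ 0) (hA : A.PosDef) :
    let G := vecMulVec u v
    let S := ((vecMulVec u v).trace / (v ⬝ᵥ A.mulVec v)) • vecMulVec v v
    Sᵀ = S ∧ S * G + Gᵀ * S = (2 : ℝ) • (S * A * S) ∧ (A * S).trace = G.trace := by
  intro G S
  have hv0 : v ≠ 0 := by
    rintro rfl; exact hv (by simp)
  have hq : (0:ℝ) < v ⬝ᵥ A.mulVec v := by
    simpa using hA.dotProduct_mulVec_pos hv0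
  have hq' : v ⬝ᵥ A.mulVec v ≠ 0 := ne_of_gt hq
  have htr : (vecMulVec u v).trace = v ⬝ᵥ u := by
    simp [Matrix.trace, Matrix.diag, vecMulVec_apply, dotProduct, mul_comm]
  set q := v ⬝ᵥ A.mulVec v with hqdef
  set c := (vecMulVec u v).trace / q with hc
  have hcq : c * q = v ⬝ᵥ u := by
    rw [hc, htr]; field_simp
  refine ⟨?_, ?_, ?_⟩
  · ext i j
    simp [S, vecMulVec_apply, mul_comm]
  · ext i j
    simp only [S, G, Matrix.add_apply, Matrix.mul_apply, Matrix.smul_apply,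
      Matrix.transpose_apply, vecMulVec_apply, smul_eq_mul]
    have h1 : ∑ k, c * (v i * v k) * (u k * v j) = c * (v ⬝ᵥ u) * (v i * v j) := by
      simp only [dotProduct, Finset.mul_sum, Finset.sum_mul]
      exact Finset.sum_congr rfl fun k _ => by ring
    have h2 : ∑ k, u k * v i * (c * (v k * v j)) = c * (v ⬝ᵥ u) * (v i * v j) := by
      simp only [dotProduct, Finset.mul_sum, Finset.sum_mul]
      exact Finset.sum_congr rfl fun k _ => by ring
    have h3 : ∑ k, (∑ l, c * (v i * v l) * A l k) * (c * (v k * v j))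
        = c * c * q * (v i * v j) := by
      rw [hqdef]
      simp only [dotProduct, Matrix.mulVec, Finset.sum_mul, Finset.mul_sum]
      rw [Finset.sum_comm]
      refine Finset.sum_congr rfl fun k _ => Finset.sum_congr rfl fun l _ => by ring
    rw [h1, h2, h3]
    have : c * c * q = c * (v ⬝ᵥ u) := by rw [mul_assoc, hcq]
    rw [this]; ring
  · have hS : S = c • vecMulVec v v := rfl
    rw [hS, Matrix.mul_smul, Matrix.trace_smul, smul_eq_mul]
    have h4 : (A * vecMulVec v v).trace = q := by
      rw [hqdef]
      simp only [Matrix.trace, Matrix.diag, Matrix.mul_apply, vecMulVec_apply, dotProduct,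
        Matrix.mulVec, Finset.mul_sum]
      exact Finset.sum_congr rfl fun k _ => Finset.sum_congr rfl fun l _ => by ring
    rw [h4, hcq]; exact htr.symm
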